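/- arXiv:2011.01572 — 3 statements merged into one kernel-verified Lean document; each statement's English description precedes it below -/
import Mathlib

section
/- In 𝒜q the following relations hold. For all integers k, ℓ ≥ 1: [G_k, G̃_{ℓ+1}] − [G_ℓ, G̃_{k+1}] = ρ(q+q⁻¹)·([W_{-ℓ}, W_{k+1}]_q − [W_{-k}, W_{ℓ+1}]_q) and [G̃_k, G_{ℓ+1}] − [G̃_ℓ, G_{k+1}] = ρ(q+q⁻¹)·([W_{ℓ+1}, W_{-k}]_q − [W_{k+1}, W_{-ℓ}]_q). For all k, ℓ ∈ ℕ: [G_{k+1}, G̃_{ℓ+1}]_q − [G_{ℓ+1}, G̃_{k+1}]_q = ρ(q+q⁻¹)·([W_{-ℓ}, W_{k+2}] − [W_{-k}, W_{ℓ+2}]) and [G̃_{k+1}, G_{ℓ+1}]_q − [G̃_{ℓ+1}, G_{k+1}]_q = ρ(q+q⁻¹)·([W_{ℓ+1}, W_{-k-1}] − [W_{k+1}, W_{-ℓ-1}]). -/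
/- STATEMENT 1: further relations (Lemma 2.3 of the paper) in 𝒜q. -/

noncomputable section

namespace Alt

/-- The base field `F = ℚ(q)`. -/
abbrev F : Type := RatFunc ℚ

/-- The indeterminate `q`. -/
def q : F := RatFunc.X

/-- Commutator `[x,y] = xy - yx`. -/
def br {A : Type*} [Ring A] (x y : A) : A := x * y - y * x

/-- `q`-commutator `[x,y]_q = q·xy - q⁻¹·yx`. -/
def qbr {A : Type*} [Ring A] [Algebra F A] (x y : A) : A :=
  q • (x * y) - q⁻¹ • (y * x)

/-- `q⁻¹`-commutator `[x,y]_{q⁻¹} = q⁻¹·xy - q·yx`. -/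
def qbr' {A : Type*} [Ring A] [Algebra F A] (x y : A) : A :=
  q⁻¹ • (x * y) - q • (y * x)

/-- Generators of the algebra `𝒜q`: `wm k ↦ W_{-k}`, `wp k ↦ W_{k+1}`,
`g k ↦ G_{k+1}`, `gt k ↦ G̃_{k+1}`. -/
inductive Gen : Type
  | wm : ℕ → Gen
  | wp : ℕ → Gen
  | g : ℕ → Gen
  | gt : ℕ → Gen

/-- The free `F`-algebra on the generators. -/
abbrev FA : Type := FreeAlgebra F Gen

/-- `W_{-k}` in the free algebra. -/
def fWm (k : ℕ) : FA := FreeAlgebra.ι F (Gen.wm k)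
/-- `W_{k+1}` in the free algebra. -/
def fWp (k : ℕ) : FA := FreeAlgebra.ι F (Gen.wp k)
/-- `G_{k+1}` in the free algebra. -/
def fG (k : ℕ) : FA := FreeAlgebra.ι F (Gen.g k)
/-- `G̃_{k+1}` in the free algebra. -/
def fGt (k : ℕ) : FA := FreeAlgebra.ι F (Gen.gt k)

/-- The defining relations of `𝒜q` (with parameter `ρ`). -/
inductive rel (ρ : F) : FA → FA → Prop
  | r1a (k : ℕ) : rel ρ (br (fWm 0) (fWp k)) ((q + q⁻¹)⁻¹ • (fGt k - fG k))
  | r1b (k : ℕ) : rel ρ (br (fWm k) (fWp 0)) ((q + q⁻¹)⁻¹ • (fGt k - fG k))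
  | r2a (k : ℕ) : rel ρ (qbr (fWm 0) (fG k)) (ρ • fWm (k + 1))
  | r2b (k : ℕ) : rel ρ (qbr (fGt k) (fWm 0)) (ρ • fWm (k + 1))
  | r3a (k : ℕ) : rel ρ (qbr (fG k) (fWp 0)) (ρ • fWp (k + 1))
  | r3b (k : ℕ) : rel ρ (qbr (fWp 0) (fGt k)) (ρ • fWp (k + 1))
  | r4a (k l : ℕ) : rel ρ (br (fWm k) (fWm l)) 0
  | r4b (k l : ℕ) : rel ρ (br (fWp k) (fWp l)) 0
  | r5 (k l : ℕ) : rel ρ (br (fWm k) (fWp l) + br (fWp k) (fWm l)) 0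
  | r6 (k l : ℕ) : rel ρ (br (fWm k) (fG l) + br (fG k) (fWm l)) 0
  | r7 (k l : ℕ) : rel ρ (br (fWm k) (fGt l) + br (fGt k) (fWm l)) 0
  | r8 (k l : ℕ) : rel ρ (br (fWp k) (fG l) + br (fG k) (fWp l)) 0
  | r9 (k l : ℕ) : rel ρ (br (fWp k) (fGt l) + br (fGt k) (fWp l)) 0
  | r10a (k l : ℕ) : rel ρ (br (fG k) (fG l)) 0
  | r10b (k l : ℕ) : rel ρ (br (fGt k) (fGt l)) 0
  | r11 (k l : ℕ) : rel ρ (br (fGt k) (fG l) + br (fG k) (fGt l)) 0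

/-- The algebra `𝒜q`: the quotient of the free algebra by the two-sided ideal
generated by the defining relations. -/
abbrev Aq (ρ : F) : Type := RingQuot (rel ρ)

/-- The generator `W_{-k}` of `𝒜q`. -/
def Wm (ρ : F) (k : ℕ) : Aq ρ := RingQuot.mkAlgHom F (rel ρ) (fWm k)
/-- The generator `W_{k+1}` of `𝒜q`. -/
def Wp (ρ : F) (k : ℕ) : Aq ρ := RingQuot.mkAlgHom F (rel ρ) (fWp k)
/-- The generator `G_{k+1}` of `𝒜q`. -/
def G (ρ : F) (k : ℕ) : Aq ρ := RingQuot.mkAlgHom F (rel ρ) (fG k)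
/-- The generator `G̃_{k+1}` of `𝒜q`. -/
def Gt (ρ : F) (k : ℕ) : Aq ρ := RingQuot.mkAlgHom F (rel ρ) (fGt k)

/-! By the first defining relations, `G̃_{ℓ+1} - G_{ℓ+1}` is `q + q⁻¹` times both
`[W_{-ℓ}, W₁]` and `[W₀, W_{ℓ+1}]`, while `ρ W_{k+2}` and `ρ W_{-k-1}` are the `q`-commutators of
`G_{k+1}`, `G̃_{k+1}` with `W₁`, `W₀`. In the first two relations, `[G_{k+1}, G̃_{ℓ+2}]` equals
`[G_{k+1}, G̃_{ℓ+2} - G_{ℓ+2}]`, which a `q`-Jacobi identity expands into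
`ρ(q + q⁻¹)[W_{-ℓ-1}, W_{k+2}]_q` minus a term that becomes symmetric in `k, ℓ` after multiplication
by `ρ`, because the `G`'s commute. In the last two, the Leibniz rule applied to
`[W_{-ℓ}, [G_{k+1}, W₁]_q]` produces `[G_{k+1}, G̃_{ℓ+1} - G_{ℓ+1}]_q / (q + q⁻¹)` plus a term that
is symmetric in `k, ℓ` because `[W_{-k}, G_{ℓ+1}] = [W_{-ℓ}, G_{k+1}]`. In each case the symmetric
term cancels from the antisymmetrised difference. -/

lemma q_ne_zero : q ≠ 0 := RatFunc.X_ne_zero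

lemma q_add_inv_ne_zero : q + q⁻¹ ≠ 0 := by
  have hX : algebraMap (Polynomial ℚ) F (Polynomial.X ^ 2 + Polynomial.C 1) ≠ 0 :=
    (map_ne_zero_iff _ (RatFunc.algebraMap_injective ℚ)).mpr
      (Polynomial.X_pow_add_C_ne_zero two_pos 1)
  have hq : q * (q + q⁻¹) = q ^ 2 + 1 := by field_simp [q_ne_zero]
  intro h
  rw [h, mul_zero] at hq
  apply hX
  simpa [q] using hq.symm

section Brackets

variable {A : Type*} [Ring A]

lemma br_anticomm (x y : A) : br x y = -br y x := (neg_sub _ _).symm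

lemma br_sub_right (x y z : A) : br x (y - z) = br x y - br x z := by
  simp only [br, mul_sub, sub_mul]; abel

lemma map_br {B Φ : Type*} [Ring B] [FunLike Φ A B] [RingHomClass Φ A B] (f : Φ) (x y : A) :
    f (br x y) = br (f x) (f y) := by
  simp only [br, map_sub, map_mul]

lemma br_eq_zero_of_commute {x y : A} (h : Commute x y) : br x y = 0 := sub_eq_zero.mpr h.eq

variable [Algebra F A]

lemma br_smul_right (a : F) (x y : A) : br x (a • y) = a • br x y := by
  simp only [br, mul_smul_comm, smul_mul_assoc, smul_sub]

lemma qbr_smul_left (a : F) (x y : A) : qbr (a • x) y = a • qbr x y := by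
  simp only [qbr, smul_mul_assoc, mul_smul_comm, smul_sub, smul_comm a]

lemma qbr_smul_right (a : F) (x y : A) : qbr x (a • y) = a • qbr x y := by
  simp only [qbr, smul_mul_assoc, mul_smul_comm, smul_sub, smul_comm a]

lemma qbr_sub_right (x y z : A) : qbr x (y - z) = qbr x y - qbr x z := by
  simp only [qbr, mul_sub, sub_mul, smul_sub]; abel

lemma qbr_neg_right (x y : A) : qbr x (-y) = -qbr x y := by
  simp only [qbr, mul_neg, neg_mul, smul_neg]; abel

lemma qbr_comm_of_commute {x y : A} (h : Commute x y) : qbr x y = qbr y x := by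
  rw [qbr, qbr, h.eq]

lemma br_qbr (x y z : A) : br x (qbr y z) = qbr (br x y) z + qbr y (br x z) := by
  simp only [br, qbr, mul_sub, sub_mul, smul_sub, smul_mul_assoc, mul_smul_comm, mul_assoc]
  abel

lemma br_br_eq_qbr_qbr_sub_qbr_qbr (x y z : A) :
    br x (br y z) = qbr y (qbr x z) - qbr (qbr y x) z := by
  simp only [br, qbr, mul_sub, sub_mul, smul_sub, smul_mul_assoc, mul_smul_comm, smul_smul,
    mul_assoc, mul_inv_cancel₀ q_ne_zero, inv_mul_cancel₀ q_ne_zero, one_smul]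
  abel

lemma qbr_qbr_right_comm_of_commute (x : A) {y z : A} (h : Commute y z) :
    qbr (qbr x y) z = qbr (qbr x z) y := by
  simp only [qbr, mul_sub, sub_mul, smul_sub, smul_mul_assoc, mul_smul_comm, smul_smul,
    mul_assoc, h.eq, h.left_comm, mul_inv_cancel₀ q_ne_zero, inv_mul_cancel₀ q_ne_zero]
  abel

lemma map_qbr {B Φ : Type*} [Ring B] [Algebra F B] [FunLike Φ A B] [AlgHomClass Φ F A B]
    (f : Φ) (x y : A) : f (qbr x y) = qbr (f x) (f y) := by
  simp only [qbr, map_sub, map_smul, map_mul]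

end Brackets

section Relations

variable (ρ : F)

lemma mkAlgHom_fWm (k : ℕ) : RingQuot.mkAlgHom F (rel ρ) (fWm k) = Wm ρ k := rfl
lemma mkAlgHom_fWp (k : ℕ) : RingQuot.mkAlgHom F (rel ρ) (fWp k) = Wp ρ k := rfl
lemma mkAlgHom_fG (k : ℕ) : RingQuot.mkAlgHom F (rel ρ) (fG k) = G ρ k := rfl
lemma mkAlgHom_fGt (k : ℕ) : RingQuot.mkAlgHom F (rel ρ) (fGt k) = Gt ρ k := rfl

lemma smul_br_Wm_zero_Wp (k : ℕ) : (q + q⁻¹) • br (Wm ρ 0) (Wp ρ k) = Gt ρ k - G ρ k := by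
  have h : br (Wm ρ 0) (Wp ρ k) = (q + q⁻¹)⁻¹ • (Gt ρ k - G ρ k) := by
    simpa only [map_br, map_smul, map_sub, mkAlgHom_fWm, mkAlgHom_fWp, mkAlgHom_fG,
      mkAlgHom_fGt] using RingQuot.mkAlgHom_rel F (rel.r1a (ρ := ρ) k)
  rw [h, smul_inv_smul₀ q_add_inv_ne_zero]

lemma smul_br_Wm_Wp_zero (k : ℕ) : (q + q⁻¹) • br (Wm ρ k) (Wp ρ 0) = Gt ρ k - G ρ k := by
  have h : br (Wm ρ k) (Wp ρ 0) = (q + q⁻¹)⁻¹ • (Gt ρ k - G ρ k) := by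
    simpa only [map_br, map_smul, map_sub, mkAlgHom_fWm, mkAlgHom_fWp, mkAlgHom_fG,
      mkAlgHom_fGt] using RingQuot.mkAlgHom_rel F (rel.r1b (ρ := ρ) k)
  rw [h, smul_inv_smul₀ q_add_inv_ne_zero]

lemma qbr_Wm_zero_G (k : ℕ) : qbr (Wm ρ 0) (G ρ k) = ρ • Wm ρ (k + 1) := by
  simpa only [map_qbr, map_smul, mkAlgHom_fWm, mkAlgHom_fWp, mkAlgHom_fG, mkAlgHom_fGt]
    using RingQuot.mkAlgHom_rel F (rel.r2a (ρ := ρ) k)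

lemma qbr_Gt_Wm_zero (k : ℕ) : qbr (Gt ρ k) (Wm ρ 0) = ρ • Wm ρ (k + 1) := by
  simpa only [map_qbr, map_smul, mkAlgHom_fWm, mkAlgHom_fWp, mkAlgHom_fG, mkAlgHom_fGt]
    using RingQuot.mkAlgHom_rel F (rel.r2b (ρ := ρ) k)

lemma qbr_G_Wp_zero (k : ℕ) : qbr (G ρ k) (Wp ρ 0) = ρ • Wp ρ (k + 1) := by
  simpa only [map_qbr, map_smul, mkAlgHom_fWm, mkAlgHom_fWp, mkAlgHom_fG, mkAlgHom_fGt]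
    using RingQuot.mkAlgHom_rel F (rel.r3a (ρ := ρ) k)

lemma qbr_Wp_zero_Gt (k : ℕ) : qbr (Wp ρ 0) (Gt ρ k) = ρ • Wp ρ (k + 1) := by
  simpa only [map_qbr, map_smul, mkAlgHom_fWm, mkAlgHom_fWp, mkAlgHom_fG, mkAlgHom_fGt]
    using RingQuot.mkAlgHom_rel F (rel.r3b (ρ := ρ) k)

lemma br_Wm_G_comm (k l : ℕ) : br (Wm ρ k) (G ρ l) = br (Wm ρ l) (G ρ k) := by
  have h := RingQuot.mkAlgHom_rel F (rel.r6 (ρ := ρ) k l)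
  rw [map_add, map_br, map_br, map_zero, mkAlgHom_fWm, mkAlgHom_fWm, mkAlgHom_fG, mkAlgHom_fG,
    br_anticomm (G ρ k)] at h
  exact add_neg_eq_zero.mp h

lemma br_Wp_Gt_comm (k l : ℕ) : br (Wp ρ k) (Gt ρ l) = br (Wp ρ l) (Gt ρ k) := by
  have h := RingQuot.mkAlgHom_rel F (rel.r9 (ρ := ρ) k l)
  rw [map_add, map_br, map_br, map_zero, mkAlgHom_fWp, mkAlgHom_fWp, mkAlgHom_fGt, mkAlgHom_fGt,
    br_anticomm (Gt ρ k)] at h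
  exact add_neg_eq_zero.mp h

lemma commute_G (k l : ℕ) : Commute (G ρ k) (G ρ l) := by
  have h := RingQuot.mkAlgHom_rel F (rel.r10a (ρ := ρ) k l)
  rw [map_br, map_zero, mkAlgHom_fG, mkAlgHom_fG] at h
  exact sub_eq_zero.mp h

lemma commute_Gt (k l : ℕ) : Commute (Gt ρ k) (Gt ρ l) := by
  have h := RingQuot.mkAlgHom_rel F (rel.r10b (ρ := ρ) k l)
  rw [map_br, map_zero, mkAlgHom_fGt, mkAlgHom_fGt] at h
  exact sub_eq_zero.mp h

lemma qbr_Wm_succ_G_comm (hρ : ρ ≠ 0) (k l : ℕ) :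
    qbr (Wm ρ (l + 1)) (G ρ k) = qbr (Wm ρ (k + 1)) (G ρ l) := by
  refine hρ.isUnit.smul_left_cancel.mp ?_
  rw [← qbr_smul_left, ← qbr_smul_left, ← qbr_Wm_zero_G, ← qbr_Wm_zero_G]
  exact qbr_qbr_right_comm_of_commute _ (commute_G ρ l k)

lemma qbr_Wp_succ_Gt_comm (hρ : ρ ≠ 0) (k l : ℕ) :
    qbr (Wp ρ (l + 1)) (Gt ρ k) = qbr (Wp ρ (k + 1)) (Gt ρ l) := by
  refine hρ.isUnit.smul_left_cancel.mp ?_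
  rw [← qbr_smul_left, ← qbr_smul_left, ← qbr_Wp_zero_Gt, ← qbr_Wp_zero_Gt]
  exact qbr_qbr_right_comm_of_commute _ (commute_Gt ρ l k)

lemma br_G_Gt_succ (k l : ℕ) :
    br (G ρ k) (Gt ρ (l + 1)) = (q + q⁻¹) •
      (ρ • qbr (Wm ρ (l + 1)) (Wp ρ (k + 1)) - qbr (qbr (Wm ρ (l + 1)) (G ρ k)) (Wp ρ 0)) := by
  calc br (G ρ k) (Gt ρ (l + 1))
      = br (G ρ k) ((q + q⁻¹) • br (Wm ρ (l + 1)) (Wp ρ 0)) := by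
        rw [smul_br_Wm_Wp_zero, br_sub_right, br_eq_zero_of_commute (commute_G ρ k (l + 1)),
          sub_zero]
    _ = (q + q⁻¹) • (qbr (Wm ρ (l + 1)) (qbr (G ρ k) (Wp ρ 0)) -
          qbr (qbr (Wm ρ (l + 1)) (G ρ k)) (Wp ρ 0)) := by
        rw [br_smul_right, br_br_eq_qbr_qbr_sub_qbr_qbr]
    _ = _ := by rw [qbr_G_Wp_zero, qbr_smul_right]

lemma br_Gt_G_succ (k l : ℕ) :
    br (Gt ρ k) (G ρ (l + 1)) = (q + q⁻¹) •
      (ρ • qbr (Wp ρ (l + 1)) (Wm ρ (k + 1)) - qbr (qbr (Wp ρ (l + 1)) (Gt ρ k)) (Wm ρ 0)) := by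
  calc br (Gt ρ k) (G ρ (l + 1))
      = br (Gt ρ k) ((q + q⁻¹) • br (Wp ρ (l + 1)) (Wm ρ 0)) := by
        rw [br_anticomm (Wp ρ (l + 1)), smul_neg, smul_br_Wm_zero_Wp, neg_sub, br_sub_right,
          br_eq_zero_of_commute (commute_Gt ρ k (l + 1)), sub_zero]
    _ = (q + q⁻¹) • (qbr (Wp ρ (l + 1)) (qbr (Gt ρ k) (Wm ρ 0)) -
          qbr (qbr (Wp ρ (l + 1)) (Gt ρ k)) (Wm ρ 0)) := by
        rw [br_smul_right, br_br_eq_qbr_qbr_sub_qbr_qbr]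
    _ = _ := by rw [qbr_Gt_Wm_zero, qbr_smul_right]

lemma smul_br_Wm_Wp_succ (k l : ℕ) :
    (ρ * (q + q⁻¹)) • br (Wm ρ l) (Wp ρ (k + 1)) =
      (q + q⁻¹) • qbr (br (Wm ρ k) (G ρ l)) (Wp ρ 0) +
        (qbr (G ρ k) (Gt ρ l) - qbr (G ρ k) (G ρ l)) := by
  calc (ρ * (q + q⁻¹)) • br (Wm ρ l) (Wp ρ (k + 1))
      = (q + q⁻¹) • br (Wm ρ l) (qbr (G ρ k) (Wp ρ 0)) := by
        rw [qbr_G_Wp_zero, br_smul_right, smul_smul, mul_comm]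
    _ = (q + q⁻¹) • (qbr (br (Wm ρ l) (G ρ k)) (Wp ρ 0) +
          qbr (G ρ k) (br (Wm ρ l) (Wp ρ 0))) := by
        rw [br_qbr]
    _ = _ := by
        rw [smul_add, ← qbr_smul_right (q + q⁻¹) (G ρ k), smul_br_Wm_Wp_zero, qbr_sub_right,
          br_Wm_G_comm ρ l k]

lemma smul_br_Wp_Wm_succ (k l : ℕ) :
    (ρ * (q + q⁻¹)) • br (Wp ρ l) (Wm ρ (k + 1)) =
      (q + q⁻¹) • qbr (br (Wp ρ k) (Gt ρ l)) (Wm ρ 0) -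
        (qbr (Gt ρ k) (Gt ρ l) - qbr (Gt ρ k) (G ρ l)) := by
  calc (ρ * (q + q⁻¹)) • br (Wp ρ l) (Wm ρ (k + 1))
      = (q + q⁻¹) • br (Wp ρ l) (qbr (Gt ρ k) (Wm ρ 0)) := by
        rw [qbr_Gt_Wm_zero, br_smul_right, smul_smul, mul_comm]
    _ = (q + q⁻¹) • (qbr (br (Wp ρ l) (Gt ρ k)) (Wm ρ 0) +
          qbr (Gt ρ k) (br (Wp ρ l) (Wm ρ 0))) := by
        rw [br_qbr]
    _ = _ := by
        rw [smul_add, ← qbr_smul_right (q + q⁻¹) (Gt ρ k), br_anticomm (Wp ρ l) (Wm ρ 0),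
          smul_neg, smul_br_Wm_zero_Wp, qbr_neg_right, qbr_sub_right, br_Wp_Gt_comm ρ l k,
          ← sub_eq_add_neg]

end Relations

/-- Lemma 2.3 of the paper. The first two relations are for `k, ℓ ≥ 1`
(written here with `k+1, ℓ+1`, `k, ℓ ∈ ℕ`), the last two for all `k, ℓ ∈ ℕ`. -/
theorem statement1 (ρ : F) (hρ : ρ ≠ 0) (k l : ℕ) :
    br (G ρ k) (Gt ρ (l + 1)) - br (G ρ l) (Gt ρ (k + 1)) =
      (ρ * (q + q⁻¹)) • (qbr (Wm ρ (l + 1)) (Wp ρ (k + 1)) -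
        qbr (Wm ρ (k + 1)) (Wp ρ (l + 1))) ∧
    br (Gt ρ k) (G ρ (l + 1)) - br (Gt ρ l) (G ρ (k + 1)) =
      (ρ * (q + q⁻¹)) • (qbr (Wp ρ (l + 1)) (Wm ρ (k + 1)) -
        qbr (Wp ρ (k + 1)) (Wm ρ (l + 1))) ∧
    qbr (G ρ k) (Gt ρ l) - qbr (G ρ l) (Gt ρ k) =
      (ρ * (q + q⁻¹)) • (br (Wm ρ l) (Wp ρ (k + 1)) - br (Wm ρ k) (Wp ρ (l + 1))) ∧
    qbr (Gt ρ k) (G ρ l) - qbr (Gt ρ l) (G ρ k) =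
      (ρ * (q + q⁻¹)) • (br (Wp ρ l) (Wm ρ (k + 1)) - br (Wp ρ k) (Wm ρ (l + 1))) := by
  refine ⟨?_, ?_, ?_, ?_⟩
  · rw [br_G_Gt_succ, br_G_Gt_succ, qbr_Wm_succ_G_comm ρ hρ k l, mul_comm ρ,
      ← smul_smul]
    simp only [smul_sub]
    abel
  · rw [br_Gt_G_succ, br_Gt_G_succ, qbr_Wp_succ_Gt_comm ρ hρ k l, mul_comm ρ,
      ← smul_smul]
    simp only [smul_sub]
    abel
  · rw [smul_sub, smul_br_Wm_Wp_succ, smul_br_Wm_Wp_succ, br_Wm_G_comm ρ l k,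
      qbr_comm_of_commute (commute_G ρ l k)]
    abel
  · rw [smul_sub, smul_br_Wp_Wm_succ, smul_br_Wp_Wm_succ, br_Wp_Gt_comm ρ l k,
      qbr_comm_of_commute (commute_Gt ρ l k)]
    abel

end Alt
end
end

section
/- The assignment W_{-k} ↦ w_{-k}, W_{k+1} ↦ w_{k+1}, G_{k+1} ↦ g_{k+1}, G̃_{k+1} ↦ g̃_{k+1} (k ∈ ℕ) extends to a K-algebra isomorphism B ≅ Ā. In particular, in B the following relations hold for all k, ℓ ∈ ℕ: [W_{-ℓ}, W_{k+1}] = (G̃_{k+ℓ+1} − G_{k+ℓ+1})/2; [G̃_{k+1}, W_{-ℓ}] = [W_{-ℓ}, G_{k+1}] = 16·W_{-k-ℓ-1}; and [W_{ℓ+1}, G̃_{k+1}] = [G_{k+1}, W_{ℓ+1}] = 16·W_{k+ℓ+2}. -/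
/-!
Only the relations of `B` in which one index is `0` are imposed, and the exchange relations
turn them into raising operators: `[G̃₁, W_{-k}] = 16 W_{-k-1}` and `[G₁, W_{k+1}] = 16 W_{k+2}`.
Since `G̃₁ = G₁ + 2 [W₀, W₁]` commutes with every `G_{k+1}`, the Jacobi identity carries each
relation of `Ā` from index `ℓ` to `ℓ + 1`. Conversely, in `Ā` the relation
`g_{k+1} = g̃_{k+1} - 2 [w₀, w_{k+1}]` shows that the `g`'s commute with the `g̃`'s, and the
other relations of `B` are instances of those of `Ā`. So the generators of each presentation
satisfy the relations of the other, and the two induced maps are mutually inverse on generators.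
-/

noncomputable section

namespace AltCl

variable (K : Type) [Field K] [CharZero K]

/-- Commutator `[x,y] = xy - yx`. -/
def br {A : Type*} [Ring A] (x y : A) : A := x * y - y * x

/-- Generators: `wm k ↦ W_{-k}`, `wp k ↦ W_{k+1}`, `g k ↦ G_{k+1}`, `gt k ↦ G̃_{k+1}`. -/
inductive Gen : Type
  | wm : ℕ → Gen
  | wp : ℕ → Gen
  | g : ℕ → Gen
  | gt : ℕ → Gen

/-- Abbreviations in the free algebra. -/
def fg (x : Gen) : FreeAlgebra K Gen := FreeAlgebra.ι K x

/-- The defining relations of `B`: the specialization at `q = 1`, `ρ = 16` of the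
defining relations of `𝒜q`. -/
inductive relB : FreeAlgebra K Gen → FreeAlgebra K Gen → Prop
  | r1a (k : ℕ) : relB (br (fg K (.wm 0)) (fg K (.wp k)))
      ((2⁻¹ : K) • (fg K (.gt k) - fg K (.g k)))
  | r1b (k : ℕ) : relB (br (fg K (.wm k)) (fg K (.wp 0)))
      ((2⁻¹ : K) • (fg K (.gt k) - fg K (.g k)))
  | r2a (k : ℕ) : relB (br (fg K (.wm 0)) (fg K (.g k))) ((16 : K) • fg K (.wm (k + 1)))
  | r2b (k : ℕ) : relB (br (fg K (.gt k)) (fg K (.wm 0))) ((16 : K) • fg K (.wm (k + 1)))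
  | r3a (k : ℕ) : relB (br (fg K (.g k)) (fg K (.wp 0))) ((16 : K) • fg K (.wp (k + 1)))
  | r3b (k : ℕ) : relB (br (fg K (.wp 0)) (fg K (.gt k))) ((16 : K) • fg K (.wp (k + 1)))
  | r4a (k l : ℕ) : relB (br (fg K (.wm k)) (fg K (.wm l))) 0
  | r4b (k l : ℕ) : relB (br (fg K (.wp k)) (fg K (.wp l))) 0
  | r5 (k l : ℕ) : relB (br (fg K (.wm k)) (fg K (.wp l)) + br (fg K (.wp k)) (fg K (.wm l))) 0
  | r6 (k l : ℕ) : relB (br (fg K (.wm k)) (fg K (.g l)) + br (fg K (.g k)) (fg K (.wm l))) 0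
  | r7 (k l : ℕ) : relB (br (fg K (.wm k)) (fg K (.gt l)) + br (fg K (.gt k)) (fg K (.wm l))) 0
  | r8 (k l : ℕ) : relB (br (fg K (.wp k)) (fg K (.g l)) + br (fg K (.g k)) (fg K (.wp l))) 0
  | r9 (k l : ℕ) : relB (br (fg K (.wp k)) (fg K (.gt l)) + br (fg K (.gt k)) (fg K (.wp l))) 0
  | r10a (k l : ℕ) : relB (br (fg K (.g k)) (fg K (.g l))) 0
  | r10b (k l : ℕ) : relB (br (fg K (.gt k)) (fg K (.gt l))) 0
  | r11 (k l : ℕ) : relB (br (fg K (.gt k)) (fg K (.g l)) + br (fg K (.g k)) (fg K (.gt l))) 0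

/-- The algebra `B`. -/
abbrev B : Type := RingQuot (relB K)

/-- `W_{-k}` in `B`. -/
def Wm (k : ℕ) : B K := RingQuot.mkAlgHom K (relB K) (fg K (.wm k))
/-- `W_{k+1}` in `B`. -/
def Wp (k : ℕ) : B K := RingQuot.mkAlgHom K (relB K) (fg K (.wp k))
/-- `G_{k+1}` in `B`. -/
def G (k : ℕ) : B K := RingQuot.mkAlgHom K (relB K) (fg K (.g k))
/-- `G̃_{k+1}` in `B`. -/
def Gt (k : ℕ) : B K := RingQuot.mkAlgHom K (relB K) (fg K (.gt k))

/-- The defining relations of the algebra `Ā` (Definition 2.11 of the paper). -/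
inductive relA : FreeAlgebra K Gen → FreeAlgebra K Gen → Prop
  | a1 (k l : ℕ) : relA (br (fg K (.wm l)) (fg K (.wp k)))
      ((2⁻¹ : K) • (fg K (.gt (k + l)) - fg K (.g (k + l))))
  | a2a (k l : ℕ) : relA (br (fg K (.gt k)) (fg K (.wm l)))
      ((16 : K) • fg K (.wm (k + l + 1)))
  | a2b (k l : ℕ) : relA (br (fg K (.wm l)) (fg K (.g k)))
      ((16 : K) • fg K (.wm (k + l + 1)))
  | a3a (k l : ℕ) : relA (br (fg K (.wp l)) (fg K (.gt k)))
      ((16 : K) • fg K (.wp (k + l + 1)))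
  | a3b (k l : ℕ) : relA (br (fg K (.g k)) (fg K (.wp l)))
      ((16 : K) • fg K (.wp (k + l + 1)))
  | a4a (k l : ℕ) : relA (br (fg K (.wm k)) (fg K (.wm l))) 0
  | a4b (k l : ℕ) : relA (br (fg K (.wp k)) (fg K (.wp l))) 0
  | a4c (k l : ℕ) : relA (br (fg K (.g k)) (fg K (.g l))) 0
  | a4d (k l : ℕ) : relA (br (fg K (.gt k)) (fg K (.gt l))) 0

/-- The algebra `Ā`. -/
abbrev Abar : Type := RingQuot (relA K)

/-- `w_{-k}` in `Ā`. -/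
def wm (k : ℕ) : Abar K := RingQuot.mkAlgHom K (relA K) (fg K (.wm k))
/-- `w_{k+1}` in `Ā`. -/
def wp (k : ℕ) : Abar K := RingQuot.mkAlgHom K (relA K) (fg K (.wp k))
/-- `g_{k+1}` in `Ā`. -/
def g (k : ℕ) : Abar K := RingQuot.mkAlgHom K (relA K) (fg K (.g k))
/-- `g̃_{k+1}` in `Ā`. -/
def gt (k : ℕ) : Abar K := RingQuot.mkAlgHom K (relA K) (fg K (.gt k))

section Commutator

variable {R A : Type*} [Ring A]

theorem br_skew (x y : A) : br x y = -br y x := by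
  simp only [br, neg_sub]

theorem br_br (x y z : A) : br (br x y) z = br x (br y z) - br y (br x z) := by
  simp only [br]; noncomm_ring

theorem leibniz_br (x y z : A) : br x (br y z) = br (br x y) z + br y (br x z) := by
  simp only [br]; noncomm_ring

theorem add_br (x y z : A) : br (x + y) z = br x z + br y z := by
  simp only [br]; noncomm_ring

theorem br_sub (x y z : A) : br x (y - z) = br x y - br x z := by
  simp only [br]; noncomm_ring

theorem zero_br (x : A) : br 0 x = 0 := by
  simp only [br, zero_mul, mul_zero, sub_self]

theorem br_zero (x : A) : br x 0 = 0 := by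
  simp only [br, zero_mul, mul_zero, sub_self]

theorem br_neg (x y : A) : br x (-y) = -br x y := by
  simp only [br]; noncomm_ring

theorem map_br {A' F : Type*} [Ring A'] [FunLike F A A'] [RingHomClass F A A'] (φ : F)
    (x y : A) : φ (br x y) = br (φ x) (φ y) := by
  simp only [br, map_sub, map_mul]

variable [CommRing R] [Algebra R A]

theorem smul_br (c : R) (x y : A) : br (c • x) y = c • br x y := by
  simp only [br, smul_mul_assoc, mul_smul_comm, smul_sub]

theorem br_smul (c : R) (x y : A) : br x (c • y) = c • br x y := by
  simp only [br, smul_mul_assoc, mul_smul_comm, smul_sub]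

end Commutator

section Families

variable {A : Type*} [Ring A] [Algebra K A]

structure IsBFamily (f : Gen → A) : Prop where
  br_wm_zero_wp (k : ℕ) : br (f (.wm 0)) (f (.wp k)) = (2⁻¹ : K) • (f (.gt k) - f (.g k))
  br_wm_wp_zero (k : ℕ) : br (f (.wm k)) (f (.wp 0)) = (2⁻¹ : K) • (f (.gt k) - f (.g k))
  br_wm_zero_g (k : ℕ) : br (f (.wm 0)) (f (.g k)) = (16 : K) • f (.wm (k + 1))
  br_gt_wm_zero (k : ℕ) : br (f (.gt k)) (f (.wm 0)) = (16 : K) • f (.wm (k + 1))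
  br_g_wp_zero (k : ℕ) : br (f (.g k)) (f (.wp 0)) = (16 : K) • f (.wp (k + 1))
  br_wp_zero_gt (k : ℕ) : br (f (.wp 0)) (f (.gt k)) = (16 : K) • f (.wp (k + 1))
  br_wm_wm (k l : ℕ) : br (f (.wm k)) (f (.wm l)) = 0
  br_wp_wp (k l : ℕ) : br (f (.wp k)) (f (.wp l)) = 0
  br_wm_wp_add_br_wp_wm (k l : ℕ) :
    br (f (.wm k)) (f (.wp l)) + br (f (.wp k)) (f (.wm l)) = 0
  br_wm_g_add_br_g_wm (k l : ℕ) : br (f (.wm k)) (f (.g l)) + br (f (.g k)) (f (.wm l)) = 0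
  br_wm_gt_add_br_gt_wm (k l : ℕ) :
    br (f (.wm k)) (f (.gt l)) + br (f (.gt k)) (f (.wm l)) = 0
  br_wp_g_add_br_g_wp (k l : ℕ) : br (f (.wp k)) (f (.g l)) + br (f (.g k)) (f (.wp l)) = 0
  br_wp_gt_add_br_gt_wp (k l : ℕ) :
    br (f (.wp k)) (f (.gt l)) + br (f (.gt k)) (f (.wp l)) = 0
  br_g_g (k l : ℕ) : br (f (.g k)) (f (.g l)) = 0
  br_gt_gt (k l : ℕ) : br (f (.gt k)) (f (.gt l)) = 0
  br_gt_g_add_br_g_gt (k l : ℕ) : br (f (.gt k)) (f (.g l)) + br (f (.g k)) (f (.gt l)) = 0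

structure IsAbarFamily (f : Gen → A) : Prop where
  br_wm_wp (k l : ℕ) :
    br (f (.wm l)) (f (.wp k)) = (2⁻¹ : K) • (f (.gt (k + l)) - f (.g (k + l)))
  br_gt_wm (k l : ℕ) : br (f (.gt k)) (f (.wm l)) = (16 : K) • f (.wm (k + l + 1))
  br_wm_g (k l : ℕ) : br (f (.wm l)) (f (.g k)) = (16 : K) • f (.wm (k + l + 1))
  br_wp_gt (k l : ℕ) : br (f (.wp l)) (f (.gt k)) = (16 : K) • f (.wp (k + l + 1))
  br_g_wp (k l : ℕ) : br (f (.g k)) (f (.wp l)) = (16 : K) • f (.wp (k + l + 1))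
  br_wm_wm (k l : ℕ) : br (f (.wm k)) (f (.wm l)) = 0
  br_wp_wp (k l : ℕ) : br (f (.wp k)) (f (.wp l)) = 0
  br_g_g (k l : ℕ) : br (f (.g k)) (f (.g l)) = 0
  br_gt_gt (k l : ℕ) : br (f (.gt k)) (f (.gt l)) = 0

variable {K} {f : Gen → A}

namespace IsBFamily

variable (h : IsBFamily K f)
include h

omit [CharZero K] in
theorem br_gt_zero_wm (k : ℕ) : br (f (.gt 0)) (f (.wm k)) = (16 : K) • f (.wm (k + 1)) := by
  rw [br_skew, ← neg_eq_of_add_eq_zero_left (h.br_wm_gt_add_br_gt_wm k 0), neg_neg,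
    h.br_gt_wm_zero]

omit [CharZero K] in
theorem br_g_zero_wp (k : ℕ) : br (f (.g 0)) (f (.wp k)) = (16 : K) • f (.wp (k + 1)) := by
  rw [br_skew, ← neg_eq_of_add_eq_zero_left (h.br_wp_g_add_br_g_wp k 0), neg_neg,
    h.br_g_wp_zero]

omit [CharZero K] in
theorem br_wp_gt_zero (k : ℕ) : br (f (.wp k)) (f (.gt 0)) = (16 : K) • f (.wp (k + 1)) := by
  rw [← h.br_wp_zero_gt k, br_skew (f (.wp 0)),
    ← eq_neg_of_add_eq_zero_left (h.br_wp_gt_add_br_gt_wp k 0)]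

theorem br_gt_zero_g (k : ℕ) : br (f (.gt 0)) (f (.g k)) = 0 := by
  have hgt : f (.gt 0) = f (.g 0) + (2 : K) • br (f (.wm 0)) (f (.wp 0)) := by
    rw [h.br_wm_zero_wp 0, smul_smul]; norm_num
  rw [hgt, add_br, h.br_g_g, zero_add, smul_br, br_br, br_skew (f (.wp 0)),
    h.br_g_wp_zero, br_neg, br_smul, h.br_wm_zero_wp, h.br_wm_zero_g, br_smul,
    br_skew (f (.wp 0)), h.br_wm_wp_zero]
  module

theorem br_gt_wm (k l : ℕ) : br (f (.gt k)) (f (.wm l)) = (16 : K) • f (.wm (k + l + 1)) := by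
  induction l generalizing k with
  | zero => exact h.br_gt_wm_zero k
  | succ l ih =>
    apply smul_right_injective A (by norm_num : (16 : K) ≠ 0)
    dsimp only
    rw [← br_smul, ← h.br_gt_zero_wm, leibniz_br, h.br_gt_gt, zero_br, zero_add, ih,
      br_smul, h.br_gt_zero_wm]
    rfl

theorem br_wm_g (k l : ℕ) : br (f (.wm l)) (f (.g k)) = (16 : K) • f (.wm (k + l + 1)) := by
  induction l generalizing k with
  | zero => exact h.br_wm_zero_g k
  | succ l ih =>
    apply smul_right_injective A (by norm_num : (16 : K) ≠ 0)
    dsimp only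
    rw [← smul_br, ← h.br_gt_zero_wm, br_br, h.br_gt_zero_g, br_zero, sub_zero, ih,
      br_smul, h.br_gt_zero_wm]
    rfl

theorem br_wp_gt (k l : ℕ) : br (f (.wp l)) (f (.gt k)) = (16 : K) • f (.wp (k + l + 1)) := by
  induction l generalizing k with
  | zero => exact h.br_wp_zero_gt k
  | succ l ih =>
    apply smul_right_injective A (by norm_num : (16 : K) ≠ 0)
    dsimp only
    rw [← smul_br, ← h.br_wp_gt_zero, br_br, h.br_gt_gt, br_zero, zero_sub, ih, br_smul,
      br_skew (f (.gt 0)), h.br_wp_gt_zero, smul_neg, neg_neg]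
    rfl

theorem br_g_wp (k l : ℕ) : br (f (.g k)) (f (.wp l)) = (16 : K) • f (.wp (k + l + 1)) := by
  induction l generalizing k with
  | zero => exact h.br_g_wp_zero k
  | succ l ih =>
    apply smul_right_injective A (by norm_num : (16 : K) ≠ 0)
    dsimp only
    rw [← br_smul, ← h.br_g_zero_wp, leibniz_br, h.br_g_g, zero_br, zero_add, ih,
      br_smul, h.br_g_zero_wp]
    rfl

theorem br_wm_wp (k l : ℕ) :
    br (f (.wm l)) (f (.wp k)) = (2⁻¹ : K) • (f (.gt (k + l)) - f (.g (k + l))) := by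
  induction l generalizing k with
  | zero => exact h.br_wm_zero_wp k
  | succ l ih =>
    apply smul_right_injective A (by norm_num : (16 : K) ≠ 0)
    dsimp only
    rw [← smul_br, ← h.br_gt_zero_wm, br_br, ih, br_smul, br_sub, h.br_gt_gt,
      h.br_gt_zero_g, br_skew (f (.gt 0)), h.br_wp_gt_zero, br_neg, br_smul, ih,
      show k + 1 + l = k + (l + 1) by omega]
    module

theorem isAbarFamily : IsAbarFamily K f :=
  ⟨h.br_wm_wp, h.br_gt_wm, h.br_wm_g, h.br_wp_gt, h.br_g_wp, h.br_wm_wm, h.br_wp_wp, h.br_g_g,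
    h.br_gt_gt⟩

end IsBFamily

namespace IsAbarFamily

variable (h : IsAbarFamily K f)
include h

theorem br_gt_g (k l : ℕ) : br (f (.gt k)) (f (.g l)) = 0 := by
  have hg : f (.g l) = f (.gt l) - (2 : K) • br (f (.wm 0)) (f (.wp l)) := by
    rw [h.br_wm_wp l 0, smul_smul]; norm_num
  rw [hg, br_sub, h.br_gt_gt, br_smul, leibniz_br, h.br_gt_wm, smul_br, h.br_wm_wp,
    br_skew (f (.gt k)), h.br_wp_gt, br_neg, br_smul, h.br_wm_wp,
    show l + (k + 0 + 1) = k + l + 1 by omega, show k + l + 1 + 0 = k + l + 1 by omega]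
  module

omit [CharZero K] in
theorem br_wm_wp_add_br_wp_wm (k l : ℕ) :
    br (f (.wm k)) (f (.wp l)) + br (f (.wp k)) (f (.wm l)) = 0 := by
  rw [br_skew (f (.wp k)), h.br_wm_wp, h.br_wm_wp, add_comm l k, add_neg_cancel]

omit [CharZero K] in
theorem br_wm_g_add_br_g_wm (k l : ℕ) :
    br (f (.wm k)) (f (.g l)) + br (f (.g k)) (f (.wm l)) = 0 := by
  rw [br_skew (f (.g k)), h.br_wm_g, h.br_wm_g, add_comm l k, add_neg_cancel]

omit [CharZero K] in
theorem br_wm_gt_add_br_gt_wm (k l : ℕ) :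
    br (f (.wm k)) (f (.gt l)) + br (f (.gt k)) (f (.wm l)) = 0 := by
  rw [br_skew (f (.wm k)), h.br_gt_wm, h.br_gt_wm, add_comm l k, neg_add_cancel]

omit [CharZero K] in
theorem br_wp_g_add_br_g_wp (k l : ℕ) :
    br (f (.wp k)) (f (.g l)) + br (f (.g k)) (f (.wp l)) = 0 := by
  rw [br_skew (f (.wp k)), h.br_g_wp, h.br_g_wp, add_comm l k, neg_add_cancel]

omit [CharZero K] in
theorem br_wp_gt_add_br_gt_wp (k l : ℕ) :
    br (f (.wp k)) (f (.gt l)) + br (f (.gt k)) (f (.wp l)) = 0 := by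
  rw [br_skew (f (.gt k)), h.br_wp_gt, h.br_wp_gt, add_comm l k, add_neg_cancel]

theorem isBFamily : IsBFamily K f where
  br_wm_zero_wp k := h.br_wm_wp k 0
  br_wm_wp_zero k := by simpa only [zero_add] using h.br_wm_wp 0 k
  br_wm_zero_g k := h.br_wm_g k 0
  br_gt_wm_zero k := h.br_gt_wm k 0
  br_g_wp_zero k := h.br_g_wp k 0
  br_wp_zero_gt k := h.br_wp_gt k 0
  br_wm_wm := h.br_wm_wm
  br_wp_wp := h.br_wp_wp
  br_wm_wp_add_br_wp_wm := h.br_wm_wp_add_br_wp_wm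
  br_wm_g_add_br_g_wm := h.br_wm_g_add_br_g_wm
  br_wm_gt_add_br_gt_wm := h.br_wm_gt_add_br_gt_wm
  br_wp_g_add_br_g_wp := h.br_wp_g_add_br_g_wp
  br_wp_gt_add_br_gt_wp := h.br_wp_gt_add_br_gt_wp
  br_g_g := h.br_g_g
  br_gt_gt := h.br_gt_gt
  br_gt_g_add_br_g_gt k l := by rw [h.br_gt_g, br_skew, h.br_gt_g, neg_zero, add_zero]

end IsAbarFamily

omit [CharZero K] in
theorem isBFamily_iff_forall_relB :
    IsBFamily K f ↔
      ∀ ⦃x y⦄, relB K x y → FreeAlgebra.lift K f x = FreeAlgebra.lift K f y := by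
  have hgen (x : Gen) : FreeAlgebra.lift K f (fg K x) = f x := FreeAlgebra.lift_ι_apply f x
  constructor
  · intro h x y hxy
    cases hxy <;> simp only [map_br, hgen, map_smul, map_sub, map_add, map_zero]
    exacts [h.br_wm_zero_wp _, h.br_wm_wp_zero _, h.br_wm_zero_g _, h.br_gt_wm_zero _,
      h.br_g_wp_zero _, h.br_wp_zero_gt _, h.br_wm_wm _ _, h.br_wp_wp _ _,
      h.br_wm_wp_add_br_wp_wm _ _, h.br_wm_g_add_br_g_wm _ _, h.br_wm_gt_add_br_gt_wm _ _,
      h.br_wp_g_add_br_g_wp _ _, h.br_wp_gt_add_br_gt_wp _ _, h.br_g_g _ _, h.br_gt_gt _ _,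
      h.br_gt_g_add_br_g_gt _ _]
  · intro H
    exact
      { br_wm_zero_wp k := by simpa [map_br, hgen] using H (.r1a k)
        br_wm_wp_zero k := by simpa [map_br, hgen] using H (.r1b k)
        br_wm_zero_g k := by simpa [map_br, hgen] using H (.r2a k)
        br_gt_wm_zero k := by simpa [map_br, hgen] using H (.r2b k)
        br_g_wp_zero k := by simpa [map_br, hgen] using H (.r3a k)
        br_wp_zero_gt k := by simpa [map_br, hgen] using H (.r3b k)
        br_wm_wm k l := by simpa [map_br, hgen] using H (.r4a k l)
        br_wp_wp k l := by simpa [map_br, hgen] using H (.r4b k l)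
        br_wm_wp_add_br_wp_wm k l := by simpa [map_br, hgen] using H (.r5 k l)
        br_wm_g_add_br_g_wm k l := by simpa [map_br, hgen] using H (.r6 k l)
        br_wm_gt_add_br_gt_wm k l := by simpa [map_br, hgen] using H (.r7 k l)
        br_wp_g_add_br_g_wp k l := by simpa [map_br, hgen] using H (.r8 k l)
        br_wp_gt_add_br_gt_wp k l := by simpa [map_br, hgen] using H (.r9 k l)
        br_g_g k l := by simpa [map_br, hgen] using H (.r10a k l)
        br_gt_gt k l := by simpa [map_br, hgen] using H (.r10b k l)
        br_gt_g_add_br_g_gt k l := by simpa [map_br, hgen] using H (.r11 k l) }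

omit [CharZero K] in
theorem isAbarFamily_iff_forall_relA :
    IsAbarFamily K f ↔
      ∀ ⦃x y⦄, relA K x y → FreeAlgebra.lift K f x = FreeAlgebra.lift K f y := by
  have hgen (x : Gen) : FreeAlgebra.lift K f (fg K x) = f x := FreeAlgebra.lift_ι_apply f x
  constructor
  · intro h x y hxy
    cases hxy <;> simp only [map_br, hgen, map_smul, map_sub, map_zero]
    exacts [h.br_wm_wp _ _, h.br_gt_wm _ _, h.br_wm_g _ _, h.br_wp_gt _ _, h.br_g_wp _ _,
      h.br_wm_wm _ _, h.br_wp_wp _ _, h.br_g_g _ _, h.br_gt_gt _ _]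
  · intro H
    exact
      { br_wm_wp k l := by simpa [map_br, hgen] using H (.a1 k l)
        br_gt_wm k l := by simpa [map_br, hgen] using H (.a2a k l)
        br_wm_g k l := by simpa [map_br, hgen] using H (.a2b k l)
        br_wp_gt k l := by simpa [map_br, hgen] using H (.a3a k l)
        br_g_wp k l := by simpa [map_br, hgen] using H (.a3b k l)
        br_wm_wm k l := by simpa [map_br, hgen] using H (.a4a k l)
        br_wp_wp k l := by simpa [map_br, hgen] using H (.a4b k l)
        br_g_g k l := by simpa [map_br, hgen] using H (.a4c k l)
        br_gt_gt k l := by simpa [map_br, hgen] using H (.a4d k l) }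

def IsBFamily.liftAlgHom (h : IsBFamily K f) : B K →ₐ[K] A :=
  RingQuot.liftAlgHom K ⟨FreeAlgebra.lift K f, isBFamily_iff_forall_relB.1 h⟩

def IsAbarFamily.liftAlgHom (h : IsAbarFamily K f) : Abar K →ₐ[K] A :=
  RingQuot.liftAlgHom K ⟨FreeAlgebra.lift K f, isAbarFamily_iff_forall_relA.1 h⟩

omit [CharZero K] in
theorem IsBFamily.liftAlgHom_mk (h : IsBFamily K f) (x : Gen) :
    h.liftAlgHom (RingQuot.mkAlgHom K (relB K) (FreeAlgebra.ι K x)) = f x := by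
  simp only [liftAlgHom, RingQuot.liftAlgHom_mkAlgHom_apply, FreeAlgebra.lift_ι_apply]

omit [CharZero K] in
theorem IsAbarFamily.liftAlgHom_mk (h : IsAbarFamily K f) (x : Gen) :
    h.liftAlgHom (RingQuot.mkAlgHom K (relA K) (FreeAlgebra.ι K x)) = f x := by
  simp only [liftAlgHom, RingQuot.liftAlgHom_mkAlgHom_apply, FreeAlgebra.lift_ι_apply]

end Families

omit [CharZero K] in
theorem isBFamily_mk : IsBFamily K (RingQuot.mkAlgHom K (relB K) ∘ FreeAlgebra.ι K) :=
  isBFamily_iff_forall_relB.2 fun _ _ hxy => by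
    rw [FreeAlgebra.lift_comp_ι]
    exact RingQuot.mkAlgHom_rel K hxy

omit [CharZero K] in
theorem isAbarFamily_mk : IsAbarFamily K (RingQuot.mkAlgHom K (relA K) ∘ FreeAlgebra.ι K) :=
  isAbarFamily_iff_forall_relA.2 fun _ _ hxy => by
    rw [FreeAlgebra.lift_comp_ι]
    exact RingQuot.mkAlgHom_rel K hxy

def bEquivAbar : B K ≃ₐ[K] Abar K :=
  AlgEquiv.ofAlgHom (isAbarFamily_mk K).isBFamily.liftAlgHom
    (isBFamily_mk K).isAbarFamily.liftAlgHom
    (by ext x; simp [IsBFamily.liftAlgHom_mk, IsAbarFamily.liftAlgHom_mk])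
    (by ext x; simp [IsBFamily.liftAlgHom_mk, IsAbarFamily.liftAlgHom_mk])

/-- The assignment `W_{-k} ↦ w_{-k}`, `W_{k+1} ↦ w_{k+1}`, `G_{k+1} ↦ g_{k+1}`,
`G̃_{k+1} ↦ g̃_{k+1}` extends to a `K`-algebra isomorphism `B ≅ Ā`; in
particular, the relations of `Ā` hold in `B` for all `k, ℓ ∈ ℕ`. -/
theorem statement9 :
    (∃ φ : B K ≃ₐ[K] Abar K,
      (∀ k : ℕ, φ (Wm K k) = wm K k) ∧ (∀ k : ℕ, φ (Wp K k) = wp K k) ∧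
      (∀ k : ℕ, φ (G K k) = g K k) ∧ (∀ k : ℕ, φ (Gt K k) = gt K k)) ∧
    (∀ k l : ℕ,
      br (Wm K l) (Wp K k) = (2⁻¹ : K) • (Gt K (k + l) - G K (k + l)) ∧
      br (Gt K k) (Wm K l) = (16 : K) • Wm K (k + l + 1) ∧
      br (Wm K l) (G K k) = (16 : K) • Wm K (k + l + 1) ∧
      br (Wp K l) (Gt K k) = (16 : K) • Wp K (k + l + 1) ∧
      br (G K k) (Wp K l) = (16 : K) • Wp K (k + l + 1)) := by
  have hφ := IsBFamily.liftAlgHom_mk (isAbarFamily_mk K).isBFamily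
  have hB := (isBFamily_mk K).isAbarFamily
  exact ⟨⟨bEquivAbar K, fun k => hφ (.wm k), fun k => hφ (.wp k), fun k => hφ (.g k),
    fun k => hφ (.gt k)⟩, fun k l => ⟨hB.br_wm_wp k l, hB.br_gt_wm k l, hB.br_wm_g k l,
    hB.br_wp_gt k l, hB.br_g_wp k l⟩⟩

end AltCl
end
end

section
/- For every p ∈ ℕ the following linear relations hold in U_q(sl₂)^{⊗N} (with δ_{p,0} the Kronecker delta and scalars identified with scalar multiples of the identity): Σ_{k=0}^{N} c_k⁽ᴺ⁾·𝒲₋ₖ₋ₚ⁽ᴺ⁾ + δ_{p,0}·ε₊⁽ᴺ⁾ = 0; Σ_{k=0}^{N} c_k⁽ᴺ⁾·𝒲ₖ₊₁₊ₚ⁽ᴺ⁾ + δ_{p,0}·ε₋⁽ᴺ⁾ = 0; Σ_{k=0}^{N} c_k⁽ᴺ⁾·𝒢ₖ₊₁₊ₚ⁽ᴺ⁾ = 0; and Σ_{k=0}^{N} c_k⁽ᴺ⁾·𝒢̃ₖ₊₁₊ₚ⁽ᴺ⁾ = 0. -/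
set_option synthInstance.maxHeartbeats 400000
set_option maxHeartbeats 800000

noncomputable section

namespace TensUq

open TensorProduct

/-- The base field `F = ℚ(q^{1/2})`. -/
abbrev F : Type := RatFunc ℚ

/-- The indeterminate `q^{1/2}`. -/
def sq : F := RatFunc.X

/-- `q = (q^{1/2})²`. -/
def q : F := sq ^ 2

/-- Generators of `U_q(sl₂)`. -/
inductive UGen : Type
  | Sp : UGen
  | Sm : UGen
  | K : UGen
  | Kinv : UGen

/-- Abbreviation in the free algebra. -/
def fU (x : UGen) : FreeAlgebra F UGen := FreeAlgebra.ι F x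

/-- The defining relations of `U_q(sl₂)`. -/
inductive relU : FreeAlgebra F UGen → FreeAlgebra F UGen → Prop
  | kk : relU (fU .K * fU .Kinv) 1
  | kk' : relU (fU .Kinv * fU .K) 1
  | ksp : relU (fU .K * fU .Sp) (q • (fU .Sp * fU .K))
  | ksm : relU (fU .K * fU .Sm) (q⁻¹ • (fU .Sm * fU .K))
  | spsm : relU (fU .Sp * fU .Sm - fU .Sm * fU .Sp)
      ((q - q⁻¹)⁻¹ • (fU .K * fU .K - fU .Kinv * fU .Kinv))

/-- The algebra `U_q(sl₂)`. -/
abbrev U : Type := RingQuot relU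

/-- `S₊`, `S₋`, `K`, `K⁻¹` in `U_q(sl₂)`. -/
def Sp : U := RingQuot.mkAlgHom F relU (fU .Sp)
def Sm : U := RingQuot.mkAlgHom F relU (fU .Sm)
def Kq : U := RingQuot.mkAlgHom F relU (fU .K)
def Kqi : U := RingQuot.mkAlgHom F relU (fU .Kinv)

/-- The iterated tensor power `U_q(sl₂)^{⊗M}` (with `U^{⊗0} = F`), new factors
being added on the left. -/
def TU : ℕ → AlgCat F
  | 0 => AlgCat.of F F
  | (M + 1) => AlgCat.of F (TensorProduct F U (TU M))

/-- The underlying type of `U_q(sl₂)^{⊗M}`. -/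
def El (M : ℕ) : Type := TU M

instance (M : ℕ) : Ring (El M) := inferInstanceAs (Ring (TU M))
instance (M : ℕ) : Algebra F (El M) := inferInstanceAs (Algebra F (TU M))

/-- The simple tensor `x ⊗ y ∈ U ⊗ U^{⊗M} = U^{⊗(M+1)}` (new factor on the left). -/
def tm {M : ℕ} (x : U) (y : El M) : El (M + 1) := x ⊗ₜ[F] y

variable (kp km εp εm : F) (v w : ℕ → F)

/-- `α_{m+1}` (0-indexed: `αf 0 = α₁`). -/
def αf : ℕ → F
  | 0 => v 0 ^ 2 * w 0 / (q + q⁻¹) + εp * εm * (q - q⁻¹) ^ 2 / (kp * km * (q + q⁻¹))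
  | (m + 1) => v (m + 1) ^ 2 * w (m + 1) / (q + q⁻¹)

/-- `ᾱ₁`: the value of `α₁` at `v₁ = 0`. -/
def αbar : F := εp * εm * (q - q⁻¹) ^ 2 / (kp * km * (q + q⁻¹))

/-- The quadruple of families `(𝒲₋ₖ⁽ᴹ⁾, 𝒲ₖ⁽ᴹ⁾, 𝒢ₖ⁽ᴹ⁾, 𝒢̃ₖ⁽ᴹ⁾)` of elements of
`U_q(sl₂)^{⊗M}`, with the conventions `𝒲₀⁽ᴹ⁾ = 0` (second family) and
`𝒢₀⁽ᴹ⁾ = 𝒢̃₀⁽ᴹ⁾ = k₊k₋(q+q⁻¹)²/(q-q⁻¹)`. -/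
def fams : (M : ℕ) → ((ℕ → El M) × (ℕ → El M) × (ℕ → El M) × (ℕ → El M))
  | 0 =>
    (fun k => match k with
      | 0 => (εp : El 0)
      | (m + 1) => ((αf kp km εp εm v w 0 / (q + q⁻¹)) ^ m *
          (αbar kp km εp εm / (q + q⁻¹)) * εp : F),
     fun k => match k with
      | 0 => (0 : F)
      | 1 => (εm : F)
      | (m + 2) => ((αf kp km εp εm v w 0 / (q + q⁻¹)) ^ m *
          (αbar kp km εp εm / (q + q⁻¹)) * εm : F),
     fun k => match k with
      | 0 => (kp * km * (q + q⁻¹) ^ 2 / (q - q⁻¹) : F)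
      | (m + 1) => ((αf kp km εp εm v w 0 / (q + q⁻¹)) ^ m * (εp * εm * (q - q⁻¹)) : F),
     fun k => match k with
      | 0 => (kp * km * (q + q⁻¹) ^ 2 / (q - q⁻¹) : F)
      | (m + 1) => ((αf kp km εp εm v w 0 / (q + q⁻¹)) ^ m * (εp * εm * (q - q⁻¹)) : F))
  | (M + 1) =>
    let p := fams M
    let pwm : ℕ → El M := p.1
    let pwp : ℕ → El M := p.2.1
    let pg : ℕ → El M := p.2.2.1
    let pgt : ℕ → El M := p.2.2.2
    let vM : F := v M
    let wM : F := w M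
    let cb : F := vM ^ 2 / (q + q⁻¹)
    let cc : F := vM ^ 2 * wM / (q + q⁻¹) ^ 2
    let wm' : ℕ → El (M + 1) := fun k =>
      Nat.rec (motive := fun _ => El (M + 1))
        (((q - q⁻¹) * vM * sq / (km * (q + q⁻¹) ^ 2)) • tm (Sp * Kq) (pg 0) +
          tm (Kq * Kq) (pwm 0))
        (fun k ih =>
          ((q - q⁻¹) * vM * sq / (km * (q + q⁻¹) ^ 2)) • tm (Sp * Kq) (pg (k + 1)) +
            tm (Kq * Kq) (pwm (k + 1)) - cb • (tm (1 : U) (pwm k)) + cc • ih) k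
    let wp' : ℕ → El (M + 1) := fun k =>
      Nat.rec (motive := fun _ => El (M + 1)) 0
        (fun k ih =>
          ((q - q⁻¹) * km * vM * sq / (kp * (q + q⁻¹) ^ 2)) • tm (Sm * Kqi) (pgt k) +
            tm (Kqi * Kqi) (pwp (k + 1)) - cb • (tm (1 : U) (pwp k)) + cc • ih) k
    let g' : ℕ → El (M + 1) := fun k =>
      Nat.rec (motive := fun _ => El (M + 1))
        (algebraMap F (El (M + 1)) (kp * km * (q + q⁻¹) ^ 2 / (q - q⁻¹)))
        (fun k ih =>
          ((q ^ 2 - (q⁻¹) ^ 2) * km * vM * sq⁻¹) • tm (Sm * Kq) (pwm k) -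
            cb • (tm (Kq * Kq) (pg k)) + tm (1 : U) (pg (k + 1)) + cc • ih) k
    let gt' : ℕ → El (M + 1) := fun k =>
      Nat.rec (motive := fun _ => El (M + 1))
        (algebraMap F (El (M + 1)) (kp * km * (q + q⁻¹) ^ 2 / (q - q⁻¹)))
        (fun k ih =>
          ((q ^ 2 - (q⁻¹) ^ 2) * kp * vM * sq⁻¹) • tm (Sp * Kqi) (pwp (k + 1)) -
            cb • (tm (Kqi * Kqi) (pgt k)) + tm (1 : U) (pgt (k + 1)) + cc • ih) k
    (wm', wp', g', gt')

/-- The elementary symmetric polynomial `e_j(α₁, …, α_N)`. -/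
def esym (N j : ℕ) : F := Multiset.esymm ((Finset.range N).val.map (αf kp km εp εm v w)) j

/-- The coefficient `c_k⁽ᴺ⁾ = (-1)^{N-k-1}·(q+q⁻¹)^k·e_{N-k}(α₁,…,α_N)`. -/
def cN (N k : ℕ) : F :=
  (-1 : F) ^ ((N : ℤ) - (k : ℤ) - 1) * (q + q⁻¹) ^ k * esym kp km εp εm v w N (N - k)

/-- `ε₊⁽ᴺ⁾ = (-1)^N·(∏ v_m²)·ε₊`. -/
def εpN (N : ℕ) : F := (-1 : F) ^ N * (∏ m ∈ Finset.range N, v m ^ 2) * εp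

/-- `ε₋⁽ᴺ⁾ = (-1)^N·(∏ v_m²)·ε₋`. -/
def εmN (N : ℕ) : F := (-1 : F) ^ N * (∏ m ∈ Finset.range N, v m ^ 2) * εm

/-!
Let `T` be the shift `(u_k) ↦ ((q + q⁻¹) u_{k+1})` on sequences and `D_M = ∏_{m=1}^{M} (T - α_m)`.
By Vieta's formulas `∑_k c_k⁽ᴺ⁾ u_{k+p} = -(D_N u)_p`, so the theorem says that `D_N` kills the
four families of level `N` up to the boundary terms `ε±⁽ᴺ⁾` at the first index.

For `M ≥ 1` every family `X` of level `M + 1` satisfies `X_{k+1} = R_k + (α_{M+1}/(q+q⁻¹)) X_k`,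
where `R` is built from the families of level `M` by tensoring on the left and shifting. Hence
`(T - α_{M+1}) X = (q + q⁻¹) R`, and since `D_M` commutes with tensoring and shifting, the relations
pass from level `M` to level `M + 1`, the boundary terms picking up the factor `-v_{M+1}²`.

At level 1 the coefficient of the recursion is `(α₁ - ᾱ₁)/(q+q⁻¹)` instead. The level-0 families
are geometric with ratio `α₁/(q+q⁻¹)` after their first term (after the second one for `𝒲₊`),
their first ratio being `ᾱ₁/(q+q⁻¹)`; through the recursion this makes the level-1 families
geometric with ratio `α₁/(q+q⁻¹)` from the next index on, which is what `T - α₁` kills.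
-/

open Polynomial

section ScaledShift

variable {K V W : Type*} [CommRing K] [AddCommGroup V] [Module K V] [AddCommGroup W] [Module K W]

variable (K) in
def seqShift : (ℕ → V) →ₗ[K] (ℕ → V) := LinearMap.funLeft K V Nat.succ

@[simp]
lemma seqShift_apply (u : ℕ → V) (k : ℕ) : seqShift K u k = u (k + 1) := rfl

def scaledShift (t : K) : Module.End K (ℕ → V) := t • seqShift K

lemma scaledShift_pow_apply (t : K) (i : ℕ) (u : ℕ → V) (p : ℕ) :
    (scaledShift t ^ i) u p = t ^ i • u (p + i) := by
  induction i generalizing u with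
  | zero => simp
  | succ i ih =>
    rw [pow_succ, Module.End.mul_apply, ih]
    simp [scaledShift, pow_succ, mul_smul, add_assoc]

lemma aeval_scaledShift_apply (t : K) (P : K[X]) (u : ℕ → V) (p : ℕ) :
    aeval (scaledShift t) P u p =
      ∑ i ∈ Finset.range (P.natDegree + 1), (P.coeff i * t ^ i) • u (p + i) := by
  simp [aeval_eq_sum_range, scaledShift_pow_apply, mul_smul]

lemma aeval_scaledShift_seqShift (t : K) (P : K[X]) (u : ℕ → V) :
    aeval (scaledShift t) P (seqShift K u) = seqShift K (aeval (scaledShift t) P u) := by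
  ext p
  simp [aeval_scaledShift_apply, add_right_comm]

lemma aeval_scaledShift_compLeft (t : K) (P : K[X]) (φ : V →ₗ[K] W) (u : ℕ → V) :
    aeval (scaledShift t) P (φ.compLeft ℕ u) = φ.compLeft ℕ (aeval (scaledShift t) P u) := by
  ext p
  simp [aeval_scaledShift_apply, map_sum]

lemma aeval_scaledShift_X_sub_C_mul_apply (t β : K) (u : ℕ → V) (p : ℕ) :
    aeval (scaledShift t) (X - C (t * β)) u p = t • (u (p + 1) - β • u p) := by
  simp [scaledShift, smul_sub, smul_smul, mul_comm]

lemma aeval_scaledShift_mul_X_sub_C_of_recurrence (t c : K) (P : K[X]) {u r : ℕ → V}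
    (hu : ∀ k, u (k + 1) = r k + c • u k) :
    aeval (scaledShift t) (P * (X - C (t * c))) u = t • aeval (scaledShift t) P r := by
  have h : aeval (scaledShift t) (X - C (t * c)) u = t • r := by
    ext p
    rw [aeval_scaledShift_X_sub_C_mul_apply, hu, add_sub_cancel_right]
    rfl
  rw [map_mul, Module.End.mul_apply, h, map_smul]

lemma aeval_scaledShift_prod_X_sub_C_apply [Nontrivial K] (t : K) (s : Multiset K)
    (u : ℕ → V) (p : ℕ) :
    aeval (scaledShift t) (s.map fun a => X - C a).prod u p =
      ∑ k ∈ Finset.range (Multiset.card s + 1),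
        ((-1) ^ (Multiset.card s - k) * s.esymm (Multiset.card s - k) * t ^ k) • u (p + k) := by
  rw [aeval_scaledShift_apply, natDegree_multiset_prod_X_sub_C_eq_card]
  refine Finset.sum_congr rfl fun k hk => ?_
  rw [Multiset.prod_X_sub_C_coeff s (Nat.lt_succ_iff.mp (Finset.mem_range.mp hk))]

lemma succ_eq_smul_of_recurrence {β c : K} {u r : ℕ → V} {m : ℕ}
    (hu : ∀ k, u (k + 1) = r k + c • u k) (hr : ∀ k ≥ m, r (k + 1) = β • r k)
    (hm : u (m + 1) = β • u m) : ∀ k ≥ m, u (k + 1) = β • u k := by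
  intro k hk
  induction k, hk using Nat.le_induction with
  | base => exact hm
  | succ k hk ih =>
    rw [hu (k + 1), hr k hk]
    conv_rhs => rw [hu k]
    rw [ih, smul_add, smul_comm β c]

end ScaledShift

lemma q_add_q_inv_ne_zero : q + q⁻¹ ≠ 0 := by
  have h : (q + q⁻¹) * q = algebraMap ℚ[X] F (X ^ 4 + C 1) := by
    simp only [map_add, map_pow, RatFunc.algebraMap_X, map_one, q, sq]
    field_simp [RatFunc.X_ne_zero]
  intro h0
  rw [h0, zero_mul] at h
  exact RatFunc.algebraMap_ne_zero (X_pow_add_C_ne_zero (by norm_num) 1) h.symm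

lemma q_sub_q_inv_ne_zero : q - q⁻¹ ≠ 0 := by
  have h : (q - q⁻¹) * q = algebraMap ℚ[X] F (X ^ 4 - C 1) := by
    simp only [map_sub, map_pow, RatFunc.algebraMap_X, map_one, q, sq]
    field_simp [RatFunc.X_ne_zero]
  intro h0
  rw [h0, zero_mul] at h
  exact RatFunc.algebraMap_ne_zero (X_pow_sub_C_ne_zero (by norm_num) 1) h.symm

def alphaPoly (M : ℕ) : F[X] := ∏ m ∈ Finset.range M, (X - C (αf kp km εp εm v w m))

local notation "𝒲₋[" M "]" => Prod.fst (fams kp km εp εm v w M)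
local notation "𝒲₊[" M "]" => Prod.fst (Prod.snd (fams kp km εp εm v w M))
local notation "𝒢[" M "]" => Prod.fst (Prod.snd (Prod.snd (fams kp km εp εm v w M)))
local notation "𝒢̃[" M "]" => Prod.snd (Prod.snd (Prod.snd (fams kp km εp εm v w M)))
local notation "𝒟[" M "]" => aeval (scaledShift (q + q⁻¹)) (alphaPoly kp km εp εm v w M)
local notation "β₀" => αf kp km εp εm v w 0 / (q + q⁻¹)
local notation "γ₀" => αbar kp km εp εm / (q + q⁻¹)

lemma alphaPoly_succ (M : ℕ) :
    alphaPoly kp km εp εm v w (M + 1) =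
      alphaPoly kp km εp εm v w M * (X - C (αf kp km εp εm v w M)) :=
  Finset.prod_range_succ _ M

lemma cN_eq (N k : ℕ) (hk : k ≤ N) :
    cN kp km εp εm v w N k =
      -((-1) ^ (N - k) * esym kp km εp εm v w N (N - k) * (q + q⁻¹) ^ k) := by
  obtain ⟨j, rfl⟩ := Nat.exists_eq_add_of_le hk
  have hsign : (-1 : F) ^ (((k + j : ℕ) : ℤ) - k - 1) = -(-1) ^ j := by
    rw [show ((k + j : ℕ) : ℤ) - k - 1 = (j : ℤ) - 1 by push_cast; ring,
      zpow_sub₀ (by norm_num), zpow_natCast, zpow_one, div_neg, div_one]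
  rw [cN, hsign, Nat.add_sub_cancel_left]
  ring

section SumCN

variable {V : Type*} [AddCommGroup V] [Module F V]

lemma sum_cN_smul (N : ℕ) (u : ℕ → V) (p : ℕ) :
    ∑ k ∈ Finset.range (N + 1), cN kp km εp εm v w N k • u (k + p) =
      -𝒟[N] u p := by
  have hpoly : alphaPoly kp km εp εm v w N =
      (((Finset.range N).val.map (αf kp km εp εm v w)).map fun a => X - C a).prod := by
    rw [alphaPoly, Finset.prod_eq_multiset_prod, Multiset.map_map]
    rfl
  rw [hpoly, aeval_scaledShift_prod_X_sub_C_apply, Multiset.card_map, Finset.range_val,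
    Multiset.card_range, ← Finset.sum_neg_distrib]
  refine Finset.sum_congr rfl fun k hk => ?_
  rw [cN_eq _ _ _ _ _ _ N k (Nat.lt_succ_iff.mp (Finset.mem_range.mp hk)), neg_smul, add_comm k p]
  rfl

lemma sum_cN_smul_succ (N : ℕ) (u : ℕ → V) (p : ℕ) :
    ∑ k ∈ Finset.range (N + 1), cN kp km εp εm v w N k • u (k + 1 + p) =
      -𝒟[N] u (p + 1) := by
  simpa only [seqShift_apply, add_right_comm, aeval_scaledShift_seqShift]
    using sum_cN_smul kp km εp εm v w N (seqShift F u) p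

end SumCN

def tmₗ {M : ℕ} (x : U) : El M →ₗ[F] El (M + 1) where
  toFun := tm x
  map_add' y z := TensorProduct.tmul_add x y z
  map_smul' := (TensorProduct.mk F U (El M) x).map_smul

@[simp]
lemma tmₗ_apply {M : ℕ} (x : U) (y : El M) : tmₗ x y = tm x y := rfl

lemma tm_zero {M : ℕ} (x : U) : tm x (0 : El M) = 0 := (tmₗ x).map_zero

lemma tm_smul {M : ℕ} (x : U) (a : F) (y : El M) : tm x (a • y) = a • tm x y :=
  (tmₗ x).map_smul a y

lemma tm_one_one {M : ℕ} : tm (1 : U) (1 : El M) = 1 := rfl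

lemma tm_one_algebraMap {M : ℕ} (a : F) :
    tm (1 : U) (algebraMap F (El M) a) = algebraMap F (El (M + 1)) a := by
  rw [Algebra.algebraMap_eq_smul_one, tm_smul, Algebra.algebraMap_eq_smul_one, tm_one_one]

lemma εpN_zero : εpN εp v 0 = εp := by simp [εpN]

lemma εmN_zero : εmN εm v 0 = εm := by simp [εmN]

-- The factor `-v_M²` is written as the product of `q + q⁻¹` and the coefficient of `1 ⊗ 𝒲` in
-- the recursion, which is the form in which it arises.
lemma εpN_succ (M : ℕ) :
    εpN εp v (M + 1) = -((q + q⁻¹) * (v M ^ 2 / (q + q⁻¹))) * εpN εp v M := by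
  rw [mul_div_cancel₀ _ q_add_q_inv_ne_zero, εpN, εpN, Finset.prod_range_succ]
  ring

lemma εmN_succ (M : ℕ) :
    εmN εm v (M + 1) = -((q + q⁻¹) * (v M ^ 2 / (q + q⁻¹))) * εmN εm v M := by
  rw [mul_div_cancel₀ _ q_add_q_inv_ne_zero, εmN, εmN, Finset.prod_range_succ]
  ring


lemma αf_zero_div_eq : β₀ = γ₀ + v 0 ^ 2 * w 0 / (q + q⁻¹) ^ 2 := by
  rw [αf, αbar]
  field_simp [q_add_q_inv_ne_zero]
  ring

lemma aeval_alphaPoly_one_apply (u : ℕ → El 1) (p : ℕ) :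
    𝒟[1] u p = (q + q⁻¹) • (u (p + 1) - β₀ • u p) := by
  have h : alphaPoly kp km εp εm v w 1 = X - C ((q + q⁻¹) * β₀) := by
    simp [alphaPoly, mul_div_cancel₀ _ q_add_q_inv_ne_zero]
  rw [h, aeval_scaledShift_X_sub_C_mul_apply]

lemma aeval_alphaPoly_succ_succ_of_recurrence (M : ℕ) (u r : ℕ → El (M + 2))
    (hu : ∀ k, u (k + 1) = r k + (v (M + 1) ^ 2 * w (M + 1) / (q + q⁻¹) ^ 2) • u k) :
    𝒟[M + 2] u = (q + q⁻¹) • 𝒟[M + 1] r := by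
  have hα : αf kp km εp εm v w (M + 1) =
      (q + q⁻¹) * (v (M + 1) ^ 2 * w (M + 1) / (q + q⁻¹) ^ 2) := by
    rw [αf]
    field_simp [q_add_q_inv_ne_zero]
  rw [alphaPoly_succ, hα, aeval_scaledShift_mul_X_sub_C_of_recurrence _ _ _ hu]

lemma fams_wm_zero (M : ℕ) :
    𝒲₋[M + 1] 0 =
      ((q - q⁻¹) * v M * sq / (km * (q + q⁻¹) ^ 2)) • tm (Sp * Kq) (𝒢[M] 0) +
        tm (Kq * Kq) (𝒲₋[M] 0) := rfl

-- The recursion of `fams`, with the level-`M` part written through linear maps of sequences, so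
-- that `𝒟[M]` can be pushed through it.
lemma fams_wm_succ (M k : ℕ) :
    𝒲₋[M + 1] (k + 1) =
      (((q - q⁻¹) * v M * sq / (km * (q + q⁻¹) ^ 2)) •
          (tmₗ (Sp * Kq)).compLeft ℕ (seqShift F 𝒢[M]) +
        (tmₗ (Kq * Kq)).compLeft ℕ (seqShift F 𝒲₋[M]) -
        (v M ^ 2 / (q + q⁻¹)) • (tmₗ 1).compLeft ℕ 𝒲₋[M]) k +
      (v M ^ 2 * w M / (q + q⁻¹) ^ 2) • 𝒲₋[M + 1] k := rfl

lemma fams_wp_zero (M : ℕ) : 𝒲₊[M + 1] 0 = 0 := rfl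

lemma fams_wp_succ (M k : ℕ) :
    𝒲₊[M + 1] (k + 1) =
      (((q - q⁻¹) * km * v M * sq / (kp * (q + q⁻¹) ^ 2)) •
          (tmₗ (Sm * Kqi)).compLeft ℕ 𝒢̃[M] +
        (tmₗ (Kqi * Kqi)).compLeft ℕ (seqShift F 𝒲₊[M]) -
        (v M ^ 2 / (q + q⁻¹)) • (tmₗ 1).compLeft ℕ 𝒲₊[M]) k +
      (v M ^ 2 * w M / (q + q⁻¹) ^ 2) • 𝒲₊[M + 1] k := rfl

lemma fams_one_g_zero : 𝒢[1] 0 = tm 1 (𝒢[0] 0) := (tm_one_algebraMap _).symm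

lemma fams_g_succ (M k : ℕ) :
    𝒢[M + 1] (k + 1) =
      (((q ^ 2 - q⁻¹ ^ 2) * km * v M * sq⁻¹) • (tmₗ (Sm * Kq)).compLeft ℕ 𝒲₋[M] -
        (v M ^ 2 / (q + q⁻¹)) • (tmₗ (Kq * Kq)).compLeft ℕ 𝒢[M] +
        (tmₗ 1).compLeft ℕ (seqShift F 𝒢[M])) k +
      (v M ^ 2 * w M / (q + q⁻¹) ^ 2) • 𝒢[M + 1] k := rfl

lemma fams_one_gt_zero : 𝒢̃[1] 0 = tm 1 (𝒢̃[0] 0) := (tm_one_algebraMap _).symm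

lemma fams_gt_succ (M k : ℕ) :
    𝒢̃[M + 1] (k + 1) =
      (((q ^ 2 - q⁻¹ ^ 2) * kp * v M * sq⁻¹) • (tmₗ (Sp * Kqi)).compLeft ℕ (seqShift F 𝒲₊[M]) -
        (v M ^ 2 / (q + q⁻¹)) • (tmₗ (Kqi * Kqi)).compLeft ℕ 𝒢̃[M] +
        (tmₗ 1).compLeft ℕ (seqShift F 𝒢̃[M])) k +
      (v M ^ 2 * w M / (q + q⁻¹) ^ 2) • 𝒢̃[M + 1] k := rfl

lemma fams_zero_wm_zero : 𝒲₋[0] 0 = algebraMap F (El 0) εp := rfl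

lemma fams_zero_wm_one : 𝒲₋[0] 1 = γ₀ • 𝒲₋[0] 0 := by
  show (β₀ ^ 0 * γ₀ * εp : F) = γ₀ * εp
  ring

lemma fams_zero_wm_succ_succ (k : ℕ) : 𝒲₋[0] (k + 2) = β₀ • 𝒲₋[0] (k + 1) := by
  show (β₀ ^ (k + 1) * γ₀ * εp : F) = β₀ * (β₀ ^ k * γ₀ * εp)
  ring

lemma fams_zero_wp_zero : 𝒲₊[0] 0 = 0 := rfl

lemma fams_zero_wp_one : 𝒲₊[0] 1 = algebraMap F (El 0) εm := rfl

lemma fams_zero_wp_two : 𝒲₊[0] 2 = γ₀ • 𝒲₊[0] 1 := by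
  show (β₀ ^ 0 * γ₀ * εm : F) = γ₀ * εm
  ring

lemma fams_zero_wp_succ_succ_succ (k : ℕ) : 𝒲₊[0] (k + 3) = β₀ • 𝒲₊[0] (k + 2) := by
  show (β₀ ^ (k + 1) * γ₀ * εm : F) = β₀ * (β₀ ^ k * γ₀ * εm)
  ring

lemma fams_zero_g_one (hkp : kp ≠ 0) (hkm : km ≠ 0) : 𝒢[0] 1 = γ₀ • 𝒢[0] 0 := by
  show (β₀ ^ 0 * (εp * εm * (q - q⁻¹)) : F) = γ₀ * (kp * km * (q + q⁻¹) ^ 2 / (q - q⁻¹))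
  have ht := q_add_q_inv_ne_zero
  have hs := q_sub_q_inv_ne_zero
  rw [αbar]
  generalize q + q⁻¹ = t at ht ⊢
  generalize q - q⁻¹ = s at hs ⊢
  field_simp

lemma fams_zero_g_succ_succ (k : ℕ) : 𝒢[0] (k + 2) = β₀ • 𝒢[0] (k + 1) := by
  show (β₀ ^ (k + 1) * (εp * εm * (q - q⁻¹)) : F) = β₀ * (β₀ ^ k * (εp * εm * (q - q⁻¹)))
  ring

lemma fams_zero_gt : 𝒢̃[0] = 𝒢[0] := rfl

def ShiftRelations (M : ℕ) : Prop :=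
  (∀ p, 𝒟[M] 𝒲₋[M] p = algebraMap F (El M) (if p = 0 then εpN εp v M else 0)) ∧
  (∀ p, 𝒟[M] 𝒲₊[M] (p + 1) = algebraMap F (El M) (if p = 0 then εmN εm v M else 0)) ∧
  (∀ p, 𝒟[M] 𝒢[M] (p + 1) = 0) ∧
  (∀ p, 𝒟[M] 𝒢̃[M] (p + 1) = 0)

section

-- `module` needs the canonical `ℕ`- and `ℤ`-algebra structures on `F`; instance search would
-- otherwise find `RatFunc.instAlgebraOfPolynomial`, on which the tactic fails.
attribute [local instance] Semiring.toNatAlgebra Ring.toIntAlgebra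

lemma fams_one_wm_succ (hkp : kp ≠ 0) (hkm : km ≠ 0) :
    ∀ k ≥ 1, 𝒲₋[1] (k + 1) = β₀ • 𝒲₋[1] k := by
  refine succ_eq_smul_of_recurrence (K := F) (u := 𝒲₋[1]) (fams_wm_succ kp km εp εm v w 0)
    (fun k hk => ?_) ?_
  · obtain ⟨j, rfl⟩ := Nat.exists_eq_add_of_le' hk
    simp only [Pi.add_apply, Pi.sub_apply, Pi.smul_apply, LinearMap.compLeft_apply,
      Function.comp_apply, seqShift_apply, tmₗ_apply, fams_zero_wm_succ_succ, fams_zero_g_succ_succ,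
      tm_smul]
    module
  · rw [fams_wm_succ kp km εp εm v w 0 1, fams_wm_succ kp km εp εm v w 0 0, fams_wm_zero]
    simp only [Pi.add_apply, Pi.sub_apply, Pi.smul_apply, LinearMap.compLeft_apply,
      Function.comp_apply, seqShift_apply, tmₗ_apply, fams_zero_wm_succ_succ, fams_zero_g_succ_succ,
      zero_add, Nat.reduceAdd, fams_zero_wm_one, fams_zero_g_one kp km εp εm v w hkp hkm, tm_smul,
      αf_zero_div_eq]
    module

lemma fams_one_wp_succ (hkp : kp ≠ 0) (hkm : km ≠ 0) :
    ∀ k ≥ 2, 𝒲₊[1] (k + 1) = β₀ • 𝒲₊[1] k := by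
  refine succ_eq_smul_of_recurrence (K := F) (u := 𝒲₊[1]) (fams_wp_succ kp km εp εm v w 0)
    (fun k hk => ?_) ?_
  · obtain ⟨j, rfl⟩ := Nat.exists_eq_add_of_le' hk
    simp only [Pi.add_apply, Pi.sub_apply, Pi.smul_apply, LinearMap.compLeft_apply,
      Function.comp_apply, seqShift_apply, tmₗ_apply, fams_zero_gt, fams_zero_wp_succ_succ_succ,
      fams_zero_g_succ_succ, tm_smul]
    module
  · rw [fams_wp_succ kp km εp εm v w 0 2, fams_wp_succ kp km εp εm v w 0 1,
      fams_wp_succ kp km εp εm v w 0 0, fams_wp_zero]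
    simp only [Pi.add_apply, Pi.sub_apply, Pi.smul_apply, LinearMap.compLeft_apply,
      Function.comp_apply, seqShift_apply, tmₗ_apply, fams_zero_gt, fams_zero_wp_succ_succ_succ,
      fams_zero_g_succ_succ, zero_add, Nat.reduceAdd, fams_zero_wp_two, fams_zero_wp_zero,
      fams_zero_g_one kp km εp εm v w hkp hkm, tm_smul, tm_zero, αf_zero_div_eq]
    module

lemma fams_one_g_succ (hkp : kp ≠ 0) (hkm : km ≠ 0) :
    ∀ k ≥ 1, 𝒢[1] (k + 1) = β₀ • 𝒢[1] k := by
  refine succ_eq_smul_of_recurrence (K := F) (u := 𝒢[1]) (fams_g_succ kp km εp εm v w 0)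
    (fun k hk => ?_) ?_
  · obtain ⟨j, rfl⟩ := Nat.exists_eq_add_of_le' hk
    simp only [Pi.add_apply, Pi.sub_apply, Pi.smul_apply, LinearMap.compLeft_apply,
      Function.comp_apply, seqShift_apply, tmₗ_apply, fams_zero_wm_succ_succ, fams_zero_g_succ_succ,
      tm_smul]
    module
  · rw [fams_g_succ kp km εp εm v w 0 1, fams_g_succ kp km εp εm v w 0 0, fams_one_g_zero]
    simp only [Pi.add_apply, Pi.sub_apply, Pi.smul_apply, LinearMap.compLeft_apply,
      Function.comp_apply, seqShift_apply, tmₗ_apply, fams_zero_g_succ_succ, zero_add,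
      Nat.reduceAdd, fams_zero_wm_one, fams_zero_g_one kp km εp εm v w hkp hkm, tm_smul,
      αf_zero_div_eq]
    module

lemma fams_one_gt_succ (hkp : kp ≠ 0) (hkm : km ≠ 0) :
    ∀ k ≥ 1, 𝒢̃[1] (k + 1) = β₀ • 𝒢̃[1] k := by
  refine succ_eq_smul_of_recurrence (K := F) (u := 𝒢̃[1]) (fams_gt_succ kp km εp εm v w 0)
    (fun k hk => ?_) ?_
  · obtain ⟨j, rfl⟩ := Nat.exists_eq_add_of_le' hk
    simp only [Pi.add_apply, Pi.sub_apply, Pi.smul_apply, LinearMap.compLeft_apply,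
      Function.comp_apply, seqShift_apply, tmₗ_apply, fams_zero_gt, fams_zero_wp_succ_succ_succ,
      fams_zero_g_succ_succ, tm_smul]
    module
  · rw [fams_gt_succ kp km εp εm v w 0 1, fams_gt_succ kp km εp εm v w 0 0, fams_one_gt_zero]
    simp only [Pi.add_apply, Pi.sub_apply, Pi.smul_apply, LinearMap.compLeft_apply,
      Function.comp_apply, seqShift_apply, tmₗ_apply, fams_zero_gt, fams_zero_g_succ_succ, zero_add,
      Nat.reduceAdd, fams_zero_wp_two, fams_zero_g_one kp km εp εm v w hkp hkm, tm_smul,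
      αf_zero_div_eq]
    module

lemma aeval_fams_one_wm (hkp : kp ≠ 0) (hkm : km ≠ 0) (p : ℕ) :
    𝒟[1] 𝒲₋[1] p = algebraMap F (El 1) (if p = 0 then εpN εp v 1 else 0) := by
  rw [aeval_alphaPoly_one_apply]
  rcases p with _ | k
  · rw [if_pos rfl, εpN_succ, εpN_zero, fams_wm_succ kp km εp εm v w 0 0, fams_wm_zero]
    simp only [Pi.add_apply, Pi.sub_apply, Pi.smul_apply, LinearMap.compLeft_apply,
      Function.comp_apply, seqShift_apply, tmₗ_apply, zero_add, fams_zero_wm_one,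
      fams_zero_g_one kp km εp εm v w hkp hkm, tm_smul, αf_zero_div_eq, fams_zero_wm_zero,
      Algebra.algebraMap_eq_smul_one, tm_one_one]
    module
  · rw [fams_one_wm_succ kp km εp εm v w hkp hkm (k + 1) le_add_self, sub_self, smul_zero,
      if_neg k.succ_ne_zero, map_zero]

lemma aeval_fams_one_wp (hkp : kp ≠ 0) (hkm : km ≠ 0) (p : ℕ) :
    𝒟[1] 𝒲₊[1] (p + 1) = algebraMap F (El 1) (if p = 0 then εmN εm v 1 else 0) := by
  rw [aeval_alphaPoly_one_apply]
  rcases p with _ | k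
  · rw [if_pos rfl, εmN_succ, εmN_zero, fams_wp_succ kp km εp εm v w 0 1,
      fams_wp_succ kp km εp εm v w 0 0, fams_wp_zero]
    simp only [Pi.add_apply, Pi.sub_apply, Pi.smul_apply, LinearMap.compLeft_apply,
      Function.comp_apply, seqShift_apply, tmₗ_apply, zero_add, Nat.reduceAdd, fams_zero_gt,
      fams_zero_wp_two, fams_zero_wp_zero, fams_zero_wp_one,
      fams_zero_g_one kp km εp εm v w hkp hkm, tm_smul, tm_zero, αf_zero_div_eq,
      Algebra.algebraMap_eq_smul_one, tm_one_one]
    module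
  · rw [fams_one_wp_succ kp km εp εm v w hkp hkm (k + 2) le_add_self, sub_self, smul_zero,
      if_neg k.succ_ne_zero, map_zero]

lemma shiftRelations_one (hkp : kp ≠ 0) (hkm : km ≠ 0) : ShiftRelations kp km εp εm v w 1 := by
  refine ⟨aeval_fams_one_wm kp km εp εm v w hkp hkm, aeval_fams_one_wp kp km εp εm v w hkp hkm,
    fun p => ?_, fun p => ?_⟩ <;> rw [aeval_alphaPoly_one_apply]
  · rw [fams_one_g_succ kp km εp εm v w hkp hkm (p + 1) le_add_self, sub_self, smul_zero]
  · rw [fams_one_gt_succ kp km εp εm v w hkp hkm (p + 1) le_add_self, sub_self, smul_zero]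

namespace ShiftRelations

variable {kp km εp εm v w} {M : ℕ}

lemma aeval_wm_succ (h : ShiftRelations kp km εp εm v w (M + 1)) (p : ℕ) :
    𝒟[M + 2] 𝒲₋[M + 2] p =
      algebraMap F (El (M + 2)) (if p = 0 then εpN εp v (M + 2) else 0) := by
  rw [aeval_alphaPoly_succ_succ_of_recurrence kp km εp εm v w M _ _ (fams_wm_succ _ _ _ _ _ _ _)]
  simp only [map_add, map_sub, map_smul, aeval_scaledShift_compLeft, aeval_scaledShift_seqShift,
    Pi.add_apply, Pi.sub_apply, Pi.smul_apply, LinearMap.compLeft_apply, Function.comp_apply,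
    seqShift_apply, tmₗ_apply, h.1, h.2.2.1, Nat.add_one_ne_zero, if_false, map_zero, smul_zero,
    zero_add, tm_one_algebraMap]
  rcases p with _ | k
  · rw [if_pos rfl, if_pos rfl, εpN_succ εp v (M + 1), Algebra.algebraMap_eq_smul_one,
      Algebra.algebraMap_eq_smul_one]
    module
  · simp

lemma aeval_wp_succ (h : ShiftRelations kp km εp εm v w (M + 1)) (p : ℕ) :
    𝒟[M + 2] 𝒲₊[M + 2] (p + 1) =
      algebraMap F (El (M + 2)) (if p = 0 then εmN εm v (M + 2) else 0) := by
  rw [aeval_alphaPoly_succ_succ_of_recurrence kp km εp εm v w M _ _ (fams_wp_succ _ _ _ _ _ _ _)]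
  simp only [map_add, map_sub, map_smul, aeval_scaledShift_compLeft, aeval_scaledShift_seqShift,
    Pi.add_apply, Pi.sub_apply, Pi.smul_apply, LinearMap.compLeft_apply, Function.comp_apply,
    seqShift_apply, tmₗ_apply, h.2.1, h.2.2.2, Nat.add_one_ne_zero, if_false, map_zero, smul_zero,
    zero_add, tm_one_algebraMap]
  rcases p with _ | k
  · rw [if_pos rfl, if_pos rfl, εmN_succ εm v (M + 1), Algebra.algebraMap_eq_smul_one,
      Algebra.algebraMap_eq_smul_one]
    module
  · simp

lemma aeval_g_succ (h : ShiftRelations kp km εp εm v w (M + 1)) (p : ℕ) :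
    𝒟[M + 2] 𝒢[M + 2] (p + 1) = 0 := by
  rw [aeval_alphaPoly_succ_succ_of_recurrence kp km εp εm v w M _ _ (fams_g_succ _ _ _ _ _ _ _)]
  simp only [map_add, map_sub, map_smul, aeval_scaledShift_compLeft, aeval_scaledShift_seqShift,
    Pi.add_apply, Pi.sub_apply, Pi.smul_apply, LinearMap.compLeft_apply, Function.comp_apply,
    seqShift_apply, h.1, h.2.2.1, Nat.add_one_ne_zero, if_false, map_zero, smul_zero, sub_zero,
    add_zero]

lemma aeval_gt_succ (h : ShiftRelations kp km εp εm v w (M + 1)) (p : ℕ) :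
    𝒟[M + 2] 𝒢̃[M + 2] (p + 1) = 0 := by
  rw [aeval_alphaPoly_succ_succ_of_recurrence kp km εp εm v w M _ _ (fams_gt_succ _ _ _ _ _ _ _)]
  simp only [map_add, map_sub, map_smul, aeval_scaledShift_compLeft, aeval_scaledShift_seqShift,
    Pi.add_apply, Pi.sub_apply, Pi.smul_apply, LinearMap.compLeft_apply, Function.comp_apply,
    seqShift_apply, h.2.1, h.2.2.2, Nat.add_one_ne_zero, if_false, map_zero, smul_zero, sub_zero,
    add_zero]

lemma succ (h : ShiftRelations kp km εp εm v w (M + 1)) :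
    ShiftRelations kp km εp εm v w (M + 2) :=
  ⟨h.aeval_wm_succ, h.aeval_wp_succ, h.aeval_g_succ, h.aeval_gt_succ⟩

end ShiftRelations

end

lemma shiftRelations (hkp : kp ≠ 0) (hkm : km ≠ 0) {N : ℕ} (hN : 1 ≤ N) :
    ShiftRelations kp km εp εm v w N := by
  induction N, hN using Nat.le_induction with
  | base => exact shiftRelations_one kp km εp εm v w hkp hkm
  | succ M hM ih =>
    obtain ⟨M, rfl⟩ := Nat.exists_eq_add_of_le' hM
    exact ih.succ

/-- The shifted linear relations among the dressed operators in `U_q(sl₂)^{⊗N}`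
(Lemma 4.4 of the paper): for every `p ∈ ℕ`. -/
theorem statement16 (hkp : kp ≠ 0) (hkm : km ≠ 0) (N : ℕ) (hN : 1 ≤ N) (p : ℕ) :
    (∑ k ∈ Finset.range (N + 1),
        cN kp km εp εm v w N k • (fams kp km εp εm v w N).1 (k + p)) +
      algebraMap F (El N) (if p = 0 then εpN εp v N else 0) = 0 ∧
    (∑ k ∈ Finset.range (N + 1),
        cN kp km εp εm v w N k • (fams kp km εp εm v w N).2.1 (k + 1 + p)) +
      algebraMap F (El N) (if p = 0 then εmN εm v N else 0) = 0 ∧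
    (∑ k ∈ Finset.range (N + 1),
        cN kp km εp εm v w N k • (fams kp km εp εm v w N).2.2.1 (k + 1 + p)) = 0 ∧
    (∑ k ∈ Finset.range (N + 1),
        cN kp km εp εm v w N k • (fams kp km εp εm v w N).2.2.2 (k + 1 + p)) = 0 := by
  obtain ⟨hWm, hWp, hG, hGt⟩ := shiftRelations kp km εp εm v w hkp hkm hN
  refine ⟨?_, ?_, ?_, ?_⟩
  · rw [sum_cN_smul, hWm, neg_add_cancel]
  · rw [sum_cN_smul_succ, hWp, neg_add_cancel]
  · rw [sum_cN_smul_succ, hG, neg_zero]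
  · rw [sum_cN_smul_succ, hGt, neg_zero]

end TensUq
end
end
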